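/- arXiv:2603.04700 — 2 statements merged into one kernel-verified Lean document; each statement's English description precedes it below -/
import Mathlib

section
/- Let n ≥ 1, s > 0, and v₀ ∈ H^s(ℝⁿ). Suppose the decay character r*(v₀) exists with -n/2 < r*(v₀) < ∞, i.e. 0 < P_{r*}(v₀) < ∞ where P_r(v₀) = lim_{ρ→0} ρ^{-2r-n} ∫_{B(0,ρ)} |v̂₀(ξ)|² dξ. Then the decay character of Λ^s v₀ := (-Δ)^{s/2} v₀ exists and equals s + r*(v₀); that is, 0 < lim_{ρ→0} ρ^{-2(s + r*(v₀)) - n} ∫_{B(0,ρ)} |ξ|^{2s} |v̂₀(ξ)|² dξ < ∞. -/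
/-!
Since `P ≠ 0`, the integrals `F t = ∫_{B(0,t)} |v̂₀|²` are not junk zeros for small `t`, so
`|v̂₀|²` is integrable on a small ball. Fubini gives the layer-cake identity
`∫_{B(0,ρ)} |ξ|^p |v̂₀|² = ρ^p F ρ - ∫_0^ρ p t^(p-1) F t dt`.
If `F t ~ P t^β` as `t → 0⁺` with `p + β > 0`, the last integral is
`~ p P ρ^(p+β) / (p+β)`, so the weighted mass is `~ β P / (p + β) · ρ^(p+β)`.
Taking `p = 2s` and `β = 2r* + n` gives decay character `s + r*` with
`P_{s+r*}(Λˢ v₀) = (2r* + n) P / (2s + 2r* + n) > 0`.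
-/

open MeasureTheory Filter Set Metric Asymptotics
open scoped FourierTransform Topology

lemma setIntegral_Ioc_zero_rpow {γ ρ : ℝ} (hγ : -1 < γ) (hρ : 0 ≤ ρ) :
    ∫ t in Ioc 0 ρ, t ^ γ = ρ ^ (γ + 1) / (γ + 1) := by
  rw [← intervalIntegral.integral_of_le hρ, integral_rpow (.inl hγ),
    Real.zero_rpow (by linarith), sub_zero]

lemma integrableOn_Ioc_zero_rpow {γ ρ : ℝ} (hγ : -1 < γ) (hρ : 0 ≤ ρ) :
    IntegrableOn (fun t : ℝ ↦ t ^ γ) (Ioc 0 ρ) :=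
  (intervalIntegrable_iff_integrableOn_Ioc_of_le hρ).1
    (intervalIntegral.intervalIntegrable_rpow' hγ)

lemma isLittleO_setIntegral_Ioc_zero {h : ℝ → ℝ} {γ : ℝ} (hγ : -1 < γ)
    (hh : h =o[𝓝[>] 0] fun t ↦ t ^ γ) :
    (fun ρ ↦ ∫ t in Ioc 0 ρ, h t) =o[𝓝[>] 0] fun ρ ↦ ρ ^ (γ + 1) := by
  refine isLittleO_iff.2 fun c hc ↦ ?_
  have hγ' : 0 < γ + 1 := by linarith
  obtain ⟨η, hη, hbound⟩ := mem_nhdsGT_iff_exists_Ioo_subset.1 (hh.def (mul_pos hc hγ'))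
  filter_upwards [Ioo_mem_nhdsGT hη] with ρ ⟨hρ, hρη⟩
  have hρ' : ∀ t ∈ Ioc 0 ρ, ‖h t‖ ≤ c * (γ + 1) * t ^ γ := fun t ⟨ht, htρ⟩ ↦ by
    simpa [Real.norm_eq_abs, abs_of_pos (Real.rpow_pos_of_pos ht γ)] using
      hbound ⟨ht, htρ.trans_lt hρη⟩
  calc ‖∫ t in Ioc 0 ρ, h t‖
      ≤ ∫ t in Ioc 0 ρ, c * (γ + 1) * t ^ γ :=
        norm_integral_le_of_norm_le ((integrableOn_Ioc_zero_rpow hγ hρ.le).const_mul _)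
          ((ae_restrict_iff' measurableSet_Ioc).2 (.of_forall hρ'))
    _ = c * ‖ρ ^ (γ + 1)‖ := by
        rw [integral_const_mul, setIntegral_Ioc_zero_rpow hγ hρ.le, Real.norm_eq_abs,
          abs_of_pos (Real.rpow_pos_of_pos hρ _)]
        field_simp

lemma tendsto_rpow_neg_mul_setIntegral_Ioc_zero {f : ℝ → ℝ} {γ L δ : ℝ} (hγ : -1 < γ)
    (hδ : 0 < δ) (hf_int : IntegrableOn f (Ioc 0 δ))
    (hf : Tendsto (fun t ↦ t ^ (-γ) * f t) (𝓝[>] 0) (𝓝 L)) :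
    Tendsto (fun ρ ↦ ρ ^ (-(γ + 1)) * ∫ t in Ioc 0 ρ, f t) (𝓝[>] 0)
      (𝓝 (L / (γ + 1))) := by
  have hrem : (fun t ↦ f t - L * t ^ γ) =o[𝓝[>] 0] fun t ↦ t ^ γ := by
    refine (isLittleO_iff_tendsto' ?_).2 ?_
    · filter_upwards [self_mem_nhdsWithin] with t (ht : 0 < t) h
      exact absurd h (Real.rpow_pos_of_pos ht γ).ne'
    · refine (tendsto_sub_nhds_zero_iff.2 hf).congr' ?_
      filter_upwards [self_mem_nhdsWithin] with t (ht : 0 < t)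
      rw [Real.rpow_neg ht.le, sub_div,
        mul_div_cancel_right₀ _ (Real.rpow_pos_of_pos ht γ).ne']
      ring
  have hlim :=
    (isLittleO_setIntegral_Ioc_zero hγ hrem).tendsto_div_nhds_zero.add_const (L / (γ + 1))
  rw [zero_add] at hlim
  refine hlim.congr' ?_
  filter_upwards [Ioo_mem_nhdsGT hδ] with ρ ⟨hρ, hρδ⟩
  rw [integral_sub (hf_int.mono_set (Ioc_subset_Ioc_right hρδ.le))
      ((integrableOn_Ioc_zero_rpow hγ hρ.le).const_mul L),
    integral_const_mul, setIntegral_Ioc_zero_rpow hγ hρ.le, Real.rpow_neg hρ.le]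
  field_simp [(Real.rpow_pos_of_pos hρ (γ + 1)).ne']
  ring

section LayerCake

variable {E : Type*} [NormedAddCommGroup E] {g : E → ℝ} {p ρ : ℝ}

noncomputable def layerCakeKernel (p : ℝ) (g : E → ℝ) : E × ℝ → ℝ :=
  {q | ‖q.1‖ < q.2}.indicator fun q ↦ p * q.2 ^ (p - 1) * g q.1

lemma setIntegral_Ioc_layerCakeKernel (hp : 0 < p) {ξ : E} (hξ : ‖ξ‖ ≤ ρ) :
    ∫ t in Ioc 0 ρ, layerCakeKernel p g (ξ, t) = (ρ ^ p - ‖ξ‖ ^ p) * g ξ := by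
  have hsec : ∀ t, layerCakeKernel p g (ξ, t) =
      (Ioi ‖ξ‖).indicator (fun t ↦ p * t ^ (p - 1)) t * g ξ := by
    intro t
    by_cases h : ‖ξ‖ < t <;> simp [layerCakeKernel, indicator, h]
  simp_rw [hsec]
  rw [integral_mul_const, setIntegral_indicator measurableSet_Ioi,
    Ioc_inter_Ioi, max_eq_right (norm_nonneg ξ), ← intervalIntegral.integral_of_le hξ,
    intervalIntegral.integral_const_mul, integral_rpow (.inl (by linarith)), sub_add_cancel]
  field_simp

variable [MeasurableSpace E] [OpensMeasurableSpace E] {μ : Measure E}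

lemma integrable_layerCakeKernel [SFinite μ] (hp : 0 < p) (hρ : 0 ≤ ρ)
    (hg : IntegrableOn g (ball 0 ρ) μ) :
    Integrable (layerCakeKernel p g)
      ((μ.restrict (ball 0 ρ)).prod (volume.restrict (Ioc 0 ρ))) := by
  have hdom : Integrable (fun q : E × ℝ ↦ p * q.2 ^ (p - 1) * g q.1)
      ((μ.restrict (ball 0 ρ)).prod (volume.restrict (Ioc 0 ρ))) := by
    simpa only [mul_comm] using
      hg.mul_prod ((integrableOn_Ioc_zero_rpow (by linarith) hρ).const_mul p)
  exact hdom.indicator (measurableSet_lt measurable_fst.norm measurable_snd)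

lemma setIntegral_ball_layerCakeKernel {t : ℝ} (ht : t ≤ ρ) :
    ∫ ξ in ball 0 ρ, layerCakeKernel p g (ξ, t) ∂μ =
      p * t ^ (p - 1) * ∫ ξ in ball 0 t, g ξ ∂μ := by
  have hsec : ∀ ξ, layerCakeKernel p g (ξ, t) =
      (ball 0 t).indicator (fun ξ ↦ p * t ^ (p - 1) * g ξ) ξ := by
    intro ξ
    simp [layerCakeKernel, indicator]
  simp_rw [hsec]
  rw [setIntegral_indicator measurableSet_ball,
    inter_eq_self_of_subset_right (ball_subset_ball ht), integral_const_mul]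

lemma integrableOn_mul_setIntegral_ball [SFinite μ] (hp : 0 < p) (hρ : 0 ≤ ρ)
    (hg : IntegrableOn g (ball 0 ρ) μ) :
    IntegrableOn (fun t ↦ p * t ^ (p - 1) * ∫ ξ in ball 0 t, g ξ ∂μ) (Ioc 0 ρ) := by
  refine (integrable_layerCakeKernel hp hρ hg).integral_prod_right.congr ?_
  filter_upwards [ae_restrict_mem measurableSet_Ioc] with t ht
  exact setIntegral_ball_layerCakeKernel ht.2

theorem setIntegral_ball_norm_rpow_mul [SFinite μ] (hp : 0 < p) (hρ : 0 ≤ ρ)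
    (hg : IntegrableOn g (ball 0 ρ) μ) :
    ∫ ξ in ball 0 ρ, ‖ξ‖ ^ p * g ξ ∂μ =
      ρ ^ p * (∫ ξ in ball 0 ρ, g ξ ∂μ) -
        ∫ t in Ioc 0 ρ, p * t ^ (p - 1) * ∫ ξ in ball 0 t, g ξ ∂μ := by
  have hK := integrable_layerCakeKernel hp hρ hg
  have hswap := integral_integral_swap (f := fun ξ t ↦ layerCakeKernel p g (ξ, t)) hK
  have hξ : ∀ ξ ∈ ball (0 : E) ρ,
      ∫ t in Ioc 0 ρ, layerCakeKernel p g (ξ, t) = (ρ ^ p - ‖ξ‖ ^ p) * g ξ :=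
    fun ξ hξ ↦ setIntegral_Ioc_layerCakeKernel hp (mem_ball_zero_iff.1 hξ).le
  have hcomp : IntegrableOn (fun ξ ↦ (ρ ^ p - ‖ξ‖ ^ p) * g ξ) (ball 0 ρ) μ :=
    hK.integral_prod_left.congr ((ae_restrict_iff' measurableSet_ball).2 (.of_forall hξ))
  rw [setIntegral_congr_fun measurableSet_ball hξ,
    setIntegral_congr_fun measurableSet_Ioc fun t ht ↦ setIntegral_ball_layerCakeKernel ht.2]
    at hswap
  rw [← hswap, ← integral_const_mul, ← integral_sub (hg.const_mul _) hcomp]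
  congr 1 with ξ
  ring

theorem tendsto_rpow_neg_mul_setIntegral_ball_norm_rpow_mul [SFinite μ] {β P δ : ℝ}
    (hp : 0 < p) (hpβ : 0 < p + β) (hδ : 0 < δ) (hg : IntegrableOn g (ball 0 δ) μ)
    (hF : Tendsto (fun ρ ↦ ρ ^ (-β) * ∫ ξ in ball 0 ρ, g ξ ∂μ) (𝓝[>] 0) (𝓝 P)) :
    Tendsto (fun ρ ↦ ρ ^ (-(p + β)) * ∫ ξ in ball 0 ρ, ‖ξ‖ ^ p * g ξ ∂μ)
      (𝓝[>] 0) (𝓝 (β * P / (p + β))) := by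
  have hmean : Tendsto (fun ρ ↦ ρ ^ (-(p + β)) *
      ∫ t in Ioc 0 ρ, p * t ^ (p - 1) * ∫ ξ in ball 0 t, g ξ ∂μ) (𝓝[>] 0)
      (𝓝 (p * P / (p + β))) := by
    have hf : Tendsto
        (fun t ↦ t ^ (-(p + β - 1)) * (p * t ^ (p - 1) * ∫ ξ in ball 0 t, g ξ ∂μ))
        (𝓝[>] 0) (𝓝 (p * P)) := by
      refine (hF.const_mul p).congr' ?_
      filter_upwards [self_mem_nhdsWithin] with t (ht : 0 < t)
      have hexp : t ^ (-(p + β - 1)) * t ^ (p - 1) = t ^ (-β) := by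
        rw [← Real.rpow_add ht]
        ring_nf
      rw [← hexp]
      ring
    simpa only [sub_add_cancel] using tendsto_rpow_neg_mul_setIntegral_Ioc_zero (by linarith)
      hδ (integrableOn_mul_setIntegral_ball hp hδ.le hg) hf
  convert (hF.sub hmean).congr' ?_ using 2
  · field_simp
    ring
  filter_upwards [Ioo_mem_nhdsGT hδ] with ρ ⟨hρ, hρδ⟩
  rw [setIntegral_ball_norm_rpow_mul hp hρ.le (hg.mono_set (ball_subset_ball hρδ.le)),
    mul_sub, ← mul_assoc, ← Real.rpow_add hρ]
  ring_nf

end LayerCake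

lemma exists_integrableOn_ball_of_tendsto {E : Type*} [NormedAddCommGroup E]
    [MeasurableSpace E] {μ : Measure E} {g : E → ℝ} {c : ℝ → ℝ} {P : ℝ} (hP : P ≠ 0)
    (h : Tendsto (fun ρ ↦ c ρ * ∫ ξ in ball 0 ρ, g ξ ∂μ) (𝓝[>] 0) (𝓝 P)) :
    ∃ δ > 0, IntegrableOn g (ball 0 δ) μ := by
  obtain ⟨δ, hne, hδ⟩ := ((h.eventually_ne hP).and self_mem_nhdsWithin).exists
  exact ⟨δ, hδ, by_contra fun hg ↦ hne (by rw [integral_undef hg, mul_zero])⟩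

theorem decay_character_fractional_laplacian_general (n : ℕ) (s : ℝ) (hs : 0 < s)
    (v₀ : EuclideanSpace ℝ (Fin n) → ℂ)
    (r : ℝ) (hr : -(n : ℝ) / 2 < r) (P : ℝ) (hP : 0 < P)
    (hlim : Tendsto
      (fun ρ : ℝ => ρ ^ (-2 * r - n) * ∫ ξ in Metric.ball (0 : EuclideanSpace ℝ (Fin n)) ρ, ‖𝓕 v₀ ξ‖ ^ 2)
      (𝓝[>] 0) (𝓝 P)) :
    ∃ Q : ℝ, 0 < Q ∧ Tendsto
      (fun ρ : ℝ => ρ ^ (-2 * (s + r) - n) *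
        ∫ ξ in Metric.ball (0 : EuclideanSpace ℝ (Fin n)) ρ, ‖ξ‖ ^ (2 * s) * ‖𝓕 v₀ ξ‖ ^ 2)
      (𝓝[>] 0) (𝓝 Q) := by
  obtain ⟨δ, hδ, hint⟩ := exists_integrableOn_ball_of_tendsto hP.ne' hlim
  have hβ : 0 < 2 * r + n := by linarith
  refine ⟨(2 * r + n) * P / (2 * s + (2 * r + n)), by positivity, ?_⟩
  have hmass : Tendsto (fun ρ : ℝ ↦ ρ ^ (-(2 * r + n)) *
      ∫ ξ in ball (0 : EuclideanSpace ℝ (Fin n)) ρ, ‖𝓕 v₀ ξ‖ ^ 2)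
      (𝓝[>] 0) (𝓝 P) := by
    convert hlim using 4
    ring
  convert tendsto_rpow_neg_mul_setIntegral_ball_norm_rpow_mul (p := 2 * s) (by positivity)
    (by positivity) hδ hint hmass using 4
  ring

/-- If `v₀ ∈ Hˢ(ℝⁿ)` has decay character `r* ∈ (-n/2, ∞)`, then the decay character of
`Λˢ v₀ = (-Δ)^{s/2} v₀` exists and equals `s + r*`. On the Fourier side, `Λˢ` is
multiplication by `|ξ|ˢ`. -/
theorem decay_character_fractional_laplacian (n : ℕ) (hn : 1 ≤ n) (s : ℝ) (hs : 0 < s)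
    (v₀ : EuclideanSpace ℝ (Fin n) → ℂ) (hv₀ : MemLp v₀ 2)
    (hHs : Integrable (fun ξ : EuclideanSpace ℝ (Fin n) => (1 + ‖ξ‖ ^ 2) ^ s * ‖𝓕 v₀ ξ‖ ^ 2))
    (r : ℝ) (hr : -(n : ℝ) / 2 < r) (P : ℝ) (hP : 0 < P)
    (hlim : Tendsto
      (fun ρ : ℝ => ρ ^ (-2 * r - n) * ∫ ξ in Metric.ball (0 : EuclideanSpace ℝ (Fin n)) ρ, ‖𝓕 v₀ ξ‖ ^ 2)
      (𝓝[>] 0) (𝓝 P)) :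
    ∃ Q : ℝ, 0 < Q ∧ Tendsto
      (fun ρ : ℝ => ρ ^ (-2 * (s + r) - n) *
        ∫ ξ in Metric.ball (0 : EuclideanSpace ℝ (Fin n)) ρ, ‖ξ‖ ^ (2 * s) * ‖𝓕 v₀ ξ‖ ^ 2)
      (𝓝[>] 0) (𝓝 Q) :=
  decay_character_fractional_laplacian_general n s hs v₀ r hr P hP hlim
end

section
/- Let ω ∈ (0,1), R > 0, and set θ = (1/2) min{(1-ω)/2, 1/(1 + R²(1-ω))}. For ξ ∈ ℝ³ with |ξ| ≤ R such that the discriminant (1 + (1-ω)|ξ|²)² - 4|ξ|² is nonnegative, let λ₋(ξ) ≤ λ₊(ξ) < 0 be the real roots of λ² + (1 + (1-ω)|ξ|²)λ + |ξ|² = 0. Then λ₊(ξ) ≤ -2θ |ξ|², and consequently e^{λ₊(ξ) t} ≤ e^{-θ |ξ|² t} for all t ≥ 0. -/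
theorem oldroyd_root_spectral_gap (ω R : ℝ) (hω : ω ∈ Set.Ioo (0 : ℝ) 1) (hR : 0 < R)
    (θ : ℝ) (hθ : θ = (1 / 2) * min ((1 - ω) / 2) (1 / (1 + R ^ 2 * (1 - ω))))
    (ξ : EuclideanSpace ℝ (Fin 3)) (hξR : ‖ξ‖ ≤ R)
    (hdisc : 0 ≤ (1 + (1 - ω) * ‖ξ‖ ^ 2) ^ 2 - 4 * ‖ξ‖ ^ 2) (lam : ℝ)
    (hroot : lam ^ 2 + (1 + (1 - ω) * ‖ξ‖ ^ 2) * lam + ‖ξ‖ ^ 2 = 0) :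
    lam ≤ -2 * θ * ‖ξ‖ ^ 2 ∧
    ∀ t : ℝ, 0 ≤ t → Real.exp (lam * t) ≤ Real.exp (-θ * ‖ξ‖ ^ 2 * t) := by
  obtain ⟨hω0, hω1⟩ := hω
  have hx : (0:ℝ) ≤ ‖ξ‖ ^ 2 := sq_nonneg _
  have h1ω : 0 < 1 - ω := by linarith
  have hxR : ‖ξ‖ ^ 2 ≤ R ^ 2 := by nlinarith [norm_nonneg ξ]
  have hb : 0 < 1 + (1 - ω) * ‖ξ‖ ^ 2 := by nlinarith
  have hBpos : 0 < 1 + R ^ 2 * (1 - ω) := by nlinarith [sq_nonneg R]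
  have hbB : 1 + (1 - ω) * ‖ξ‖ ^ 2 ≤ 1 + R ^ 2 * (1 - ω) := by nlinarith
  have hθpos : 0 < θ := by
    rw [hθ]
    have h2 : 0 < min ((1 - ω) / 2) (1 / (1 + R ^ 2 * (1 - ω))) :=
      lt_min (by linarith) (by positivity)
    linarith
  have hθle : θ ≤ (1 / 2) * (1 / (1 + R ^ 2 * (1 - ω))) := by
    rw [hθ]
    have := min_le_right ((1 - ω) / 2) (1 / (1 + R ^ 2 * (1 - ω)))
    nlinarith
  have h2θb : 2 * θ * (1 + (1 - ω) * ‖ξ‖ ^ 2) ≤ 1 := by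
    have h1 : 2 * θ ≤ 1 / (1 + R ^ 2 * (1 - ω)) := by linarith
    have h2 : 2 * θ * (1 + (1 - ω) * ‖ξ‖ ^ 2) ≤ 2 * θ * (1 + R ^ 2 * (1 - ω)) := by
      nlinarith
    have h3 : (1 / (1 + R ^ 2 * (1 - ω))) * (1 + R ^ 2 * (1 - ω)) = 1 := by
      field_simp
    nlinarith
  have hmain : lam ≤ -2 * θ * ‖ξ‖ ^ 2 := by
    have hlb : lam * (1 + (1 - ω) * ‖ξ‖ ^ 2) ≤ -‖ξ‖ ^ 2 := by nlinarith [sq_nonneg lam]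
    -- -x ≤ -2θx·b, so lam·b ≤ -2θx·b, divide by b
    nlinarith [mul_nonneg (mul_nonneg (le_of_lt hθpos) hx) (le_of_lt hb)]
  refine ⟨hmain, fun t ht => ?_⟩
  apply Real.exp_le_exp.mpr
  have : lam ≤ -θ * ‖ξ‖ ^ 2 := by nlinarith
  nlinarith
end
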